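/- Let μ > 0 and let M ≥ 2 be an even integer. For l ∈ {0, 1, …, M−1} set α_l = √μ·e^{2πil/M}. Then for all m, n, m', n' ∈ ℕ: (1/(2M))·Σ_{l=0}^{M−1} [c_{α_l}(m)·c_{α_l}(n)·conj(c_{α_l}(m')·c_{α_l}(n')) + c_{α_l}(m)·c_{−α_l}(n)·conj(c_{α_l}(m')·c_{−α_l}(n'))] = Σ_{j=0}^{M−1} \tildeP_{j|2μ}·(1/2)·[g_{j,2μ}(m,n)·g_{j,2μ}(m',n') + g'_{j,2μ}(m,n)·g'_{j,2μ}(m',n')]. (That is, the equal mixture of the in-phase pair |α_l⟩|α_l⟩ and the anti-phase pair |α_l⟩|−α_l⟩, averaged over the M uniformly spaced phases, equals the mixture Σ_{j=0}^{M−1} \tildeP_{j|2μ} τ_{j|2μ} with τ_{j|2μ} = ½|ĵ_{2μ}⟩⟨ĵ_{2μ}| + ½|ĵ'_{2μ}⟩⟨ĵ'_{2μ}|; this is the paper's decomposition ρ_β = (2/M) Σ_{j=0}^{M−1} \tildeP_{j|2β} τ_{j|2β} of the retained decoy- and code-mode states, up to the overall factor 2/M.) -/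

import Mathlib

/-- Coherent-state coefficient: `c_α(n) = e^{−|α|²/2} α^n / √(n!)`. -/
noncomputable def coherentCoeff (α : ℂ) (n : ℕ) : ℂ :=
  Complex.exp (-((‖α‖ : ℝ) : ℂ) ^ 2 / 2) * α ^ n / (Real.sqrt (Nat.factorial n) : ℂ)

/-- Poisson probability with mean `lam`: `P_{j|lam} = e^{−lam} lam^j / j!`. -/
noncomputable def poisson (lam : ℝ) (j : ℕ) : ℝ :=
  Real.exp (-lam) * lam ^ j / (Nat.factorial j : ℝ)

/-- `tildeP M lam j = Σ_{n=0}^∞ P_{j+Mn|lam}`. -/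
noncomputable def tildeP (M : ℕ) (lam : ℝ) (j : ℕ) : ℝ :=
  ∑' n : ℕ, poisson lam (j + M * n)

/-- Two-mode coefficients of the state `|ĵ_lam⟩`. -/
noncomputable def g (M : ℕ) (lam : ℝ) (j : ℕ) (p : ℕ × ℕ) : ℝ :=
  if (p.1 + p.2) % M = j % M then
    Real.sqrt (poisson lam (p.1 + p.2) / tildeP M lam j)
      * Real.sqrt ((Nat.factorial (p.1 + p.2) : ℝ)
          / (2 ^ (p.1 + p.2) * Nat.factorial p.1 * Nat.factorial p.2))
  else 0

/-- Two-mode coefficients of the state `|ĵ'_lam⟩`: `g'_{j,lam}(m,n) = (−1)^m g_{j,lam}(m,n)`. -/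
noncomputable def g' (M : ℕ) (lam : ℝ) (j : ℕ) (p : ℕ × ℕ) : ℝ :=
  (-1 : ℝ) ^ p.1 * g M lam j p

/-!
Writing `α = √μ u` with `‖u‖ = 1`, every coherent coefficient factors as `√P_μ(k) u^k`, and the
anti-phase partner only contributes the sign `(-1)^n`. Each summand is therefore a real weight times
`u^(m+n) (u^(m'+n'))⁻¹`, and averaging over the `M`-th roots of unity `u = ζ^l` keeps exactly the
entries with `m + n ≡ m' + n' (mod M)`. On the other side only `j ≡ m + n` contributes, and since
`P_{2μ}(a+b) (a+b)! / (2^(a+b) a! b!) = P_μ(a) P_μ(b)` the normalisation `tildeP` cancels. The two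
sign weights `1 + (-1)^(n+n')` and `1 + (-1)^(m+m')` agree because `M` is even.
-/

open Finset Nat

lemma poisson_nonneg {lam : ℝ} (h : 0 ≤ lam) (j : ℕ) : 0 ≤ poisson lam j := by
  unfold poisson
  positivity

lemma poisson_pos {lam : ℝ} (h : 0 < lam) (j : ℕ) : 0 < poisson lam j := by
  unfold poisson
  positivity

lemma summable_poisson (lam : ℝ) : Summable (poisson lam) := by
  refine ((Real.summable_pow_div_factorial lam).mul_left (Real.exp (-lam))).congr fun k => ?_
  rw [poisson, mul_div_assoc]

lemma tildeP_pos {M : ℕ} (hM : 0 < M) {lam : ℝ} (h : 0 < lam) (j : ℕ) :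
    0 < tildeP M lam j := by
  have hinj : Function.Injective fun n : ℕ => j + M * n := fun a b hab =>
    Nat.eq_of_mul_eq_mul_left hM (Nat.add_left_cancel hab)
  exact ((summable_poisson lam).comp_injective hinj).tsum_pos
    (fun _ => poisson_nonneg h.le _) 0 (poisson_pos h _)

lemma sqrt_poisson {μ : ℝ} (hμ : 0 ≤ μ) (k : ℕ) :
    Real.sqrt (poisson μ k) = Real.exp (-μ / 2) * Real.sqrt μ ^ k / Real.sqrt k ! := by
  rw [Real.sqrt_eq_iff_mul_self_eq (poisson_nonneg hμ k) (by positivity)]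
  calc poisson μ k = Real.exp (-μ / 2 + -μ / 2) * (Real.sqrt μ * Real.sqrt μ) ^ k
        / (Real.sqrt k ! * Real.sqrt k !) := by
        rw [add_halves, Real.mul_self_sqrt hμ, Real.mul_self_sqrt (by positivity), poisson]
    _ = _ := by rw [Real.exp_add]; ring

lemma coherentCoeff_sqrt_mul {μ : ℝ} (hμ : 0 ≤ μ) {u : ℂ} (hu : ‖u‖ = 1) (k : ℕ) :
    coherentCoeff (Real.sqrt μ * u) k = Real.sqrt (poisson μ k) * u ^ k := by
  have hnorm : ‖(Real.sqrt μ : ℂ) * u‖ = Real.sqrt μ := by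
    rw [norm_mul, hu, mul_one, Complex.norm_real, Real.norm_of_nonneg (Real.sqrt_nonneg μ)]
  have hsq : (Real.sqrt μ : ℂ) ^ 2 = μ := by exact_mod_cast Real.sq_sqrt hμ
  rw [coherentCoeff, hnorm, hsq, sqrt_poisson hμ]
  push_cast
  ring_nf

lemma coherentCoeff_neg (α : ℂ) (k : ℕ) :
    coherentCoeff (-α) k = (-1) ^ k * coherentCoeff α k := by
  rw [coherentCoeff, coherentCoeff, norm_neg, neg_pow]
  ring

lemma coherentCoeff_pair_mixture {μ : ℝ} (hμ : 0 ≤ μ) {u : ℂ} (hu : ‖u‖ = 1) (m n m' n' : ℕ) :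
    coherentCoeff (Real.sqrt μ * u) m * coherentCoeff (Real.sqrt μ * u) n
        * (starRingEnd ℂ) (coherentCoeff (Real.sqrt μ * u) m' * coherentCoeff (Real.sqrt μ * u) n')
      + coherentCoeff (Real.sqrt μ * u) m * coherentCoeff (-(Real.sqrt μ * u)) n
        * (starRingEnd ℂ)
            (coherentCoeff (Real.sqrt μ * u) m' * coherentCoeff (-(Real.sqrt μ * u)) n') =
      (((1 + (-1) ^ (n + n')) * (Real.sqrt (poisson μ m) * Real.sqrt (poisson μ n)
          * Real.sqrt (poisson μ m') * Real.sqrt (poisson μ n')) : ℝ) : ℂ)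
        * (u ^ (m + n) * (u ^ (m' + n'))⁻¹) := by
  simp only [coherentCoeff_neg, coherentCoeff_sqrt_mul hμ hu, map_mul, map_pow, map_neg, map_one,
    Complex.conj_ofReal, ← Complex.inv_eq_conj hu]
  push_cast
  ring

lemma sum_range_pow_eq_ite {F : Type*} [Field F] [DecidableEq F] {z : F} {M : ℕ}
    (hz : z ^ M = 1) :
    ∑ l ∈ range M, z ^ l = if z = 1 then (M : F) else 0 := by
  split_ifs with h
  · simp [h]
  · rw [geom_sum_eq h, hz, sub_self, zero_div]

lemma IsPrimitiveRoot.sum_pow_mul_inv_pow {F : Type*} [Field F] {ζ : F} {M : ℕ}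
    (hζ : IsPrimitiveRoot ζ M) (K K' : ℕ) :
    ∑ l ∈ range M, (ζ ^ l) ^ K * ((ζ ^ l) ^ K')⁻¹ = if K ≡ K' [MOD M] then (M : F) else 0 := by
  classical
  obtain rfl | hM := eq_or_ne M 0
  · simp
  have hsummand : ∀ l, (ζ ^ l) ^ K * ((ζ ^ l) ^ K')⁻¹ = (ζ ^ K * (ζ ^ K')⁻¹) ^ l := fun l => by
    rw [← pow_mul, ← pow_mul, mul_comm l, mul_comm l, pow_mul, pow_mul, mul_pow, inv_pow]
  have hpow : (ζ ^ K * (ζ ^ K')⁻¹) ^ M = 1 := by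
    rw [mul_pow, inv_pow, ← pow_mul, ← pow_mul, mul_comm K, mul_comm K', pow_mul, pow_mul,
      hζ.pow_eq_one, one_pow, one_pow, inv_one, one_mul]
  have hone : ζ ^ K * (ζ ^ K')⁻¹ = 1 ↔ K ≡ K' [MOD M] := by
    rw [mul_inv_eq_one₀ (pow_ne_zero _ (hζ.ne_zero hM)),
      (hζ.isOfFinOrder hM).pow_eq_pow_iff_modEq, ← hζ.eq_orderOf]
  simp only [hsummand, sum_range_pow_eq_ite hpow, hone]

lemma poisson_two_mul_mul_binomial (μ : ℝ) (a b : ℕ) :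
    poisson (2 * μ) (a + b) * ((a + b)! / (2 ^ (a + b) * a ! * b !)) =
      poisson μ a * poisson μ b := by
  have hexp : Real.exp (-(2 * μ)) = Real.exp (-μ) * Real.exp (-μ) := by
    rw [← Real.exp_add]; ring_nf
  unfold poisson
  rw [hexp, mul_pow]
  field_simp
  ring

lemma g_eq_zero {M : ℕ} {lam : ℝ} {j : ℕ} {p : ℕ × ℕ} (h : (p.1 + p.2) % M ≠ j % M) :
    g M lam j p = 0 :=
  if_neg h

lemma sqrt_tildeP_mul_g {M : ℕ} (hM : 0 < M) {μ : ℝ} (hμ : 0 < μ) {j a b : ℕ}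
    (h : (a + b) % M = j % M) :
    Real.sqrt (tildeP M (2 * μ) j) * g M (2 * μ) j (a, b) =
      Real.sqrt (poisson μ a) * Real.sqrt (poisson μ b) := by
  have hT : 0 < Real.sqrt (tildeP M (2 * μ) j) :=
    Real.sqrt_pos.2 (tildeP_pos hM (by positivity) j)
  rw [g, if_pos h, Real.sqrt_div' _ (Real.sqrt_pos.1 hT).le, ← mul_assoc, mul_div_cancel₀ _ hT.ne',
    ← Real.sqrt_mul (poisson_nonneg (by positivity) _), poisson_two_mul_mul_binomial,
    Real.sqrt_mul (poisson_nonneg hμ.le _)]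

lemma sum_tildeP_mul_mixture_g {M : ℕ} (hM : 0 < M) {μ : ℝ} (hμ : 0 < μ) (m n m' n' : ℕ) :
    ∑ j ∈ range M, tildeP M (2 * μ) j * (1 / 2)
        * (g M (2 * μ) j (m, n) * g M (2 * μ) j (m', n')
          + g' M (2 * μ) j (m, n) * g' M (2 * μ) j (m', n')) =
      if m + n ≡ m' + n' [MOD M] then
        (1 + (-1) ^ (m + m')) * (Real.sqrt (poisson μ m) * Real.sqrt (poisson μ n)
          * Real.sqrt (poisson μ m') * Real.sqrt (poisson μ n')) / 2
      else 0 := by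
  set j₀ := (m + n) % M
  have hj₀ : j₀ % M = (m + n) % M := Nat.mod_mod _ _
  rw [sum_eq_single_of_mem j₀ (mem_range.2 (Nat.mod_lt _ hM)) fun j hj hne => by
    rw [g', g', g_eq_zero (by rw [Nat.mod_eq_of_lt (mem_range.1 hj)]; exact Ne.symm hne)]
    ring]
  split_ifs with h
  · have hT := Real.mul_self_sqrt (tildeP_pos hM (by positivity : 0 < 2 * μ) j₀).le
    have hmn := sqrt_tildeP_mul_g hM hμ hj₀.symm
    have hmn' := sqrt_tildeP_mul_g hM hμ (h.symm.trans hj₀.symm)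
    rw [g', g', ← hT]
    linear_combination (1 + (-1) ^ m * (-1) ^ m') / 2
      * (Real.sqrt (tildeP M (2 * μ) j₀) * g M (2 * μ) j₀ (m', n') * hmn
        + Real.sqrt (poisson μ m) * Real.sqrt (poisson μ n) * hmn')
  · rw [g', g', g_eq_zero (j := j₀) (p := (m', n')) (fun h' => h (hj₀ ▸ h').symm)]
    ring

lemma neg_one_pow_add_eq_of_modEq {R : Type*} [Ring R] {M : ℕ} (hM : Even M) {m n m' n' : ℕ}
    (h : m + n ≡ m' + n' [MOD M]) : (-1 : R) ^ (m + m') = (-1) ^ (n + n') := by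
  have h2 : (m + n) % 2 = (m' + n') % 2 := h.of_dvd hM.two_dvd
  rw [neg_one_pow_eq_pow_mod_two, neg_one_pow_eq_pow_mod_two (n + n')]
  congr 1
  omega


/-- The equal mixture of the in-phase pair `|α_l⟩|α_l⟩` and anti-phase pair `|α_l⟩|−α_l⟩`,
averaged over the `M` uniformly spaced phases, equals the mixture
`Σ_{j=0}^{M−1} tildeP_{j|2μ} τ_{j|2μ}` with `τ_{j|2μ} = ½|ĵ_{2μ}⟩⟨ĵ_{2μ}| + ½|ĵ'_{2μ}⟩⟨ĵ'_{2μ}|`,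
entrywise in the photon-number basis (up to the overall factor `2/M`). -/
theorem retained_state_decomposition (μ : ℝ) (hμ : 0 < μ)
    (M : ℕ) (hM : 2 ≤ M) (hMeven : Even M) (α : ℕ → ℂ)
    (hα : ∀ l, α l = (Real.sqrt μ : ℂ)
      * Complex.exp (2 * Real.pi * l / M * Complex.I)) (m n m' n' : ℕ) :
    (1 / (2 * (M : ℂ))) * ∑ l ∈ Finset.range M,
        (coherentCoeff (α l) m * coherentCoeff (α l) n
            * (starRingEnd ℂ) (coherentCoeff (α l) m' * coherentCoeff (α l) n')
          + coherentCoeff (α l) m * coherentCoeff (-(α l)) n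
            * (starRingEnd ℂ) (coherentCoeff (α l) m' * coherentCoeff (-(α l)) n')) =
      ((∑ j ∈ Finset.range M,
          tildeP M (2 * μ) j * (1 / 2)
            * (g M (2 * μ) j (m, n) * g M (2 * μ) j (m', n')
              + g' M (2 * μ) j (m, n) * g' M (2 * μ) j (m', n')) : ℝ) : ℂ) := by
  have hMpos : 0 < M := by omega
  have hM0 : M ≠ 0 := hMpos.ne'
  set ζ := Complex.exp (2 * Real.pi * Complex.I / M)
  have hζ : IsPrimitiveRoot ζ M := Complex.isPrimitiveRoot_exp M hM0
  have hαζ : ∀ l, α l = Real.sqrt μ * ζ ^ l := fun l => by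
    rw [hα, ← Complex.exp_nat_mul]
    ring_nf
  have hnorm : ∀ l, ‖ζ ^ l‖ = 1 := fun l => by rw [norm_pow, hζ.norm'_eq_one hM0, one_pow]
  simp only [hαζ, coherentCoeff_pair_mixture hμ.le (hnorm _), ← Finset.mul_sum,
    hζ.sum_pow_mul_inv_pow, sum_tildeP_mul_mixture_g hMpos hμ]
  split_ifs with h
  · rw [neg_one_pow_add_eq_of_modEq hMeven h]
    push_cast
    field_simp
  · simp
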